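/- For ℰ, ℰ' i.i.d. standard exponentials, ℰ_t = (ℰ−1) − t(ℰ'−1), and 0 ≤ t ≤ 1, one has E|ℰ_t|³ = 2·(6e^{t-1}/(1+t) + t³ − 1). -/

import Mathlib

/-!
Conditionally on `ℰ' = y` we have `ℰ_t = ℰ - c` with `c = 1 - t + t y`, and `c ≥ 0` since
`0 ≤ t ≤ 1` and `y > 0`. Writing `|u|³ = 2 (u⁺)³ - u³`, memorylessness gives
`E ((ℰ - c)⁺)³ = e^{-c} E ℰ³ = 6 e^{-c}`, hence `E |ℰ - c|³ = c³ - 3c² + 6c - 6 + 12 e^{-c}`.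
Averaging this over `y`, using the moments `E ℰ'^k = k!` and the Laplace transform
`E e^{-t ℰ'} = 1 / (1 + t)`, gives the formula.
-/

open MeasureTheory ProbabilityTheory Real Set

/-- Density of a standard exponential random variable. -/
noncomputable def expPDF : ℝ → ℝ := fun x => if 0 < x then Real.exp (-x) else 0

/-- `X` has density `f` with respect to Lebesgue measure. -/
def HasDensity {Ω : Type*} [MeasurableSpace Ω] (P : Measure Ω) (X : Ω → ℝ) (f : ℝ → ℝ) : Prop :=
  Measurable X ∧ Measure.map X P = volume.withDensity (fun x => ENNReal.ofReal (f x))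

open scoped Nat

theorem integral_pow_mul_exp_neg_Ioi (n : ℕ) : ∫ x in Ioi 0, x ^ n * exp (-x) = n ! := by
  rw [← Real.Gamma_nat_eq_factorial, Real.Gamma_eq_integral (by positivity)]
  refine setIntegral_congr_fun measurableSet_Ioi fun x _ => ?_
  simp [mul_comm]

theorem integrableOn_pow_mul_exp_neg_Ioi (n : ℕ) :
    IntegrableOn (fun x : ℝ => x ^ n * exp (-x)) (Ioi 0) :=
  (Real.GammaIntegral_convergent (s := n + 1) (by positivity)).congr_fun
    (fun x _ => by simp [mul_comm]) measurableSet_Ioi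

theorem integral_Ioi_comp_sub_mul_exp_neg (g : ℝ → ℝ) (c : ℝ) :
    ∫ x in Ioi c, g (x - c) * exp (-x) = exp (-c) * ∫ x in Ioi 0, g x * exp (-x) := by
  rw [← (measurePreserving_add_right volume c).setIntegral_preimage_emb
    (measurableEmbedding_addRight c), preimage_add_const_Ioi, sub_self, ← integral_const_mul]
  refine setIntegral_congr_fun measurableSet_Ioi fun x _ => ?_
  rw [add_sub_cancel_right, neg_add, exp_add]
  ring

theorem measurable_expPDF : Measurable expPDF :=
  Measurable.ite measurableSet_Ioi (by fun_prop) measurable_const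

theorem expPDF_nonneg (x : ℝ) : 0 ≤ expPDF x := by
  unfold expPDF
  split_ifs <;> positivity

theorem expPDF_mul_eq_indicator (f : ℝ → ℝ) :
    (fun x => expPDF x * f x) = (Ioi 0).indicator (fun x => f x * exp (-x)) := by
  ext x
  by_cases hx : 0 < x <;> simp [expPDF, hx, mul_comm]

noncomputable def stdExpMeasure : Measure ℝ :=
  volume.withDensity fun x => ENNReal.ofReal (expPDF x)

instance : SFinite stdExpMeasure := by
  rw [stdExpMeasure]
  infer_instance

theorem integral_stdExpMeasure (f : ℝ → ℝ) :
    ∫ x, f x ∂stdExpMeasure = ∫ x in Ioi 0, f x * exp (-x) := by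
  rw [stdExpMeasure, integral_withDensity_eq_integral_toReal_smul
    measurable_expPDF.ennreal_ofReal (ae_of_all _ fun _ => ENNReal.ofReal_lt_top)]
  simp only [ENNReal.toReal_ofReal (expPDF_nonneg _), smul_eq_mul]
  rw [expPDF_mul_eq_indicator, integral_indicator measurableSet_Ioi]

theorem integrable_stdExpMeasure_iff {f : ℝ → ℝ} :
    Integrable f stdExpMeasure ↔ IntegrableOn (fun x => f x * exp (-x)) (Ioi 0) := by
  rw [stdExpMeasure, integrable_withDensity_iff_integrable_smul'
    measurable_expPDF.ennreal_ofReal (ae_of_all _ fun _ => ENNReal.ofReal_lt_top)]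
  simp only [ENNReal.toReal_ofReal (expPDF_nonneg _), smul_eq_mul]
  rw [expPDF_mul_eq_indicator, integrable_indicator_iff measurableSet_Ioi]

theorem ae_pos_stdExpMeasure : ∀ᵐ x ∂stdExpMeasure, 0 < x := by
  rw [stdExpMeasure, ae_withDensity_iff measurable_expPDF.ennreal_ofReal]
  refine ae_of_all _ fun x hx => ?_
  by_contra h
  simp [expPDF, h] at hx

theorem integral_pow_stdExpMeasure (n : ℕ) : ∫ x, x ^ n ∂stdExpMeasure = n ! := by
  rw [integral_stdExpMeasure, integral_pow_mul_exp_neg_Ioi]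

theorem integrable_pow_stdExpMeasure (n : ℕ) : Integrable (fun x : ℝ => x ^ n) stdExpMeasure :=
  integrable_stdExpMeasure_iff.2 (integrableOn_pow_mul_exp_neg_Ioi n)

theorem integrable_sum_mul_pow_stdExpMeasure {n : ℕ} (a : Fin n → ℝ) :
    Integrable (fun x => ∑ k, a k * x ^ (k : ℕ)) stdExpMeasure :=
  integrable_finsetSum _ fun k _ => (integrable_pow_stdExpMeasure k).const_mul (a k)

theorem integral_sum_mul_pow_stdExpMeasure {n : ℕ} (a : Fin n → ℝ) :
    ∫ x, ∑ k, a k * x ^ (k : ℕ) ∂stdExpMeasure = ∑ k, a k * (k : ℕ)! := by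
  rw [integral_finsetSum _ fun (k : Fin n) _ => (integrable_pow_stdExpMeasure k).const_mul (a k)]
  simp only [integral_const_mul, integral_pow_stdExpMeasure]

theorem integrable_cubic_stdExpMeasure (a b c d : ℝ) :
    Integrable (fun x => a + b * x + c * x ^ 2 + d * x ^ 3) stdExpMeasure := by
  simpa [Fin.sum_univ_four, add_assoc] using integrable_sum_mul_pow_stdExpMeasure ![a, b, c, d]

theorem integral_cubic_stdExpMeasure (a b c d : ℝ) :
    ∫ x, a + b * x + c * x ^ 2 + d * x ^ 3 ∂stdExpMeasure = a + b + 2 * c + 6 * d := by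
  simpa [Fin.sum_univ_four, Nat.factorial, mul_comm] using
    integral_sum_mul_pow_stdExpMeasure ![a, b, c, d]

theorem integrable_exp_neg_mul_stdExpMeasure {a : ℝ} (ha : -1 < a) :
    Integrable (fun x => exp (-(a * x))) stdExpMeasure := by
  refine integrable_stdExpMeasure_iff.2 <|
    (exp_neg_integrableOn_Ioi 0 (b := 1 + a) (by linarith)).congr_fun (fun x _ => ?_)
      measurableSet_Ioi
  rw [← exp_add]
  ring_nf

theorem integral_exp_neg_mul_stdExpMeasure {a : ℝ} (ha : -1 < a) :
    ∫ x, exp (-(a * x)) ∂stdExpMeasure = 1 / (1 + a) := by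
  rw [integral_stdExpMeasure]
  calc ∫ x in Ioi 0, exp (-(a * x)) * exp (-x) = ∫ x in Ioi 0, exp (-(1 + a) * x) :=
        setIntegral_congr_fun measurableSet_Ioi fun x _ => by rw [← exp_add]; ring_nf
    _ = 1 / (1 + a) := by
        rw [integral_exp_mul_Ioi (by linarith), mul_zero, exp_zero, neg_div_neg_eq]

theorem integral_indicator_Ioi_comp_sub_stdExpMeasure (g : ℝ → ℝ) {c : ℝ} (hc : 0 ≤ c) :
    ∫ x, (Ioi c).indicator (fun x => g (x - c)) x ∂stdExpMeasure =
      exp (-c) * ∫ x, g x ∂stdExpMeasure := by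
  rw [integral_stdExpMeasure, integral_stdExpMeasure, ← integral_Ioi_comp_sub_mul_exp_neg]
  simp_rw [← indicator_mul_left (Ioi c) (fun x => g (x - c)) (fun x => exp (-x))]
  rw [setIntegral_indicator measurableSet_Ioi, inter_eq_right.2 (Ioi_subset_Ioi hc)]

theorem integrable_sub_pow_stdExpMeasure (c : ℝ) (n : ℕ) :
    Integrable (fun x => (x - c) ^ n) stdExpMeasure := by
  simp_rw [sub_eq_add_neg, add_pow]
  exact integrable_finsetSum _ fun m _ =>
    ((integrable_pow_stdExpMeasure m).mul_const _).mul_const _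

theorem integral_sub_pow_three_stdExpMeasure (c : ℝ) :
    ∫ x, (x - c) ^ 3 ∂stdExpMeasure = 6 - 6 * c + 3 * c ^ 2 - c ^ 3 := by
  calc ∫ x, (x - c) ^ 3 ∂stdExpMeasure
      = ∫ x, -c ^ 3 + 3 * c ^ 2 * x + -3 * c * x ^ 2 + 1 * x ^ 3 ∂stdExpMeasure := by
        congr 1 with x
        ring
    _ = 6 - 6 * c + 3 * c ^ 2 - c ^ 3 := by
        rw [integral_cubic_stdExpMeasure]
        ring

theorem abs_sub_pow_three_eq (x c : ℝ) :
    |x - c| ^ 3 = 2 * (Ioi c).indicator (fun x => (x - c) ^ 3) x - (x - c) ^ 3 := by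
  by_cases hx : c < x
  · rw [abs_of_pos (sub_pos.2 hx), indicator_of_mem (mem_Ioi.2 hx)]
    ring
  · rw [abs_of_nonpos (by linarith), indicator_of_notMem (notMem_Ioi.2 (not_lt.1 hx))]
    ring

noncomputable def absCubeMoment (c : ℝ) : ℝ := c ^ 3 - 3 * c ^ 2 + 6 * c - 6 + 12 * exp (-c)

theorem integral_abs_sub_pow_three_stdExpMeasure {c : ℝ} (hc : 0 ≤ c) :
    ∫ x, |x - c| ^ 3 ∂stdExpMeasure = absCubeMoment c := by
  have hint := integrable_sub_pow_stdExpMeasure c 3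
  have htail : ∫ x, (Ioi c).indicator (fun x => (x - c) ^ 3) x ∂stdExpMeasure = 6 * exp (-c) := by
    rw [integral_indicator_Ioi_comp_sub_stdExpMeasure (· ^ 3) hc, integral_pow_stdExpMeasure]
    norm_num [Nat.factorial]
    ring
  simp_rw [abs_sub_pow_three_eq _ c]
  rw [integral_sub ((hint.indicator measurableSet_Ioi).const_mul 2) hint, integral_const_mul,
    htail, integral_sub_pow_three_stdExpMeasure, absCubeMoment]
  ring

theorem integrable_abs_sub_pow_three_stdExpMeasure (c : ℝ) :
    Integrable (fun x => |x - c| ^ 3) stdExpMeasure := by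
  simpa only [abs_pow] using (integrable_sub_pow_stdExpMeasure c 3).abs

theorem absCubeMoment_affine (t y : ℝ) :
    absCubeMoment (1 - t + t * y) =
      ((1 - t) ^ 3 - 3 * (1 - t) ^ 2 + 6 * (1 - t) - 6)
        + t * (3 * (1 - t) ^ 2 - 6 * (1 - t) + 6) * y + t ^ 2 * (3 * (1 - t) - 3) * y ^ 2
        + t ^ 3 * y ^ 3 + 12 * exp (t - 1) * exp (-(t * y)) := by
  rw [absCubeMoment, mul_assoc 12, ← exp_add]
  ring_nf

theorem integrable_absCubeMoment_affine {t : ℝ} (ht : 0 ≤ t) :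
    Integrable (fun y => absCubeMoment (1 - t + t * y)) stdExpMeasure := by
  simp_rw [absCubeMoment_affine]
  exact (integrable_cubic_stdExpMeasure _ _ _ _).add
    ((integrable_exp_neg_mul_stdExpMeasure (by linarith)).const_mul _)

theorem integral_absCubeMoment_affine {t : ℝ} (ht : 0 ≤ t) :
    ∫ y, absCubeMoment (1 - t + t * y) ∂stdExpMeasure =
      2 * (6 * exp (t - 1) / (1 + t) + t ^ 3 - 1) := by
  simp_rw [absCubeMoment_affine]
  rw [integral_add (integrable_cubic_stdExpMeasure _ _ _ _)
    ((integrable_exp_neg_mul_stdExpMeasure (by linarith)).const_mul _),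
    integral_cubic_stdExpMeasure, integral_const_mul,
    integral_exp_neg_mul_stdExpMeasure (by linarith)]
  field_simp
  ring

theorem integral_prod_eq_of_nonneg {α β : Type*} [MeasurableSpace α] [MeasurableSpace β]
    {μ : Measure α} {ν : Measure β} [SFinite μ] [SFinite ν] {f : α × β → ℝ} {g : β → ℝ}
    (hf : AEStronglyMeasurable f (μ.prod ν)) (hf0 : 0 ≤ f)
    (hfg : ∀ᵐ y ∂ν, Integrable (fun x => f (x, y)) μ ∧ ∫ x, f (x, y) ∂μ = g y)
    (hg : Integrable g ν) : ∫ p, f p ∂μ.prod ν = ∫ y, g y ∂ν := by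
  have hfi : Integrable f (μ.prod ν) := by
    refine (integrable_prod_iff' hf).2 ⟨hfg.mono fun y hy => hy.1, hg.congr ?_⟩
    filter_upwards [hfg] with y hy
    simp_rw [Real.norm_of_nonneg (hf0 _)]
    exact hy.2.symm
  rw [integral_prod_symm f hfi]
  exact integral_congr_ae (hfg.mono fun y hy => hy.2)

theorem stmt_13 {Ω : Type} [MeasurableSpace Ω] (P : Measure Ω) [IsProbabilityMeasure P]
    (E E' : Ω → ℝ) (hE : HasDensity P E expPDF) (hE' : HasDensity P E' expPDF)
    (hind : IndepFun E E' P)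
    (t : ℝ) (ht0 : 0 ≤ t) (ht1 : t ≤ 1) :
    (∫ ω, |(E ω - 1) - t * (E' ω - 1)| ^ 3 ∂P) =
      2 * (6 * Real.exp (t - 1) / (1 + t) + t ^ 3 - 1) := by
  obtain ⟨hEm, hElaw⟩ := hE
  obtain ⟨hE'm, hE'law⟩ := hE'
  have hjoint : P.map (fun ω => (E ω, E' ω)) = stdExpMeasure.prod stdExpMeasure := by
    rw [(indepFun_iff_map_prod_eq_prod_map_map hEm.aemeasurable hE'm.aemeasurable).1 hind,
      hElaw, hE'law, stdExpMeasure]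
  have hcont : Continuous fun p : ℝ × ℝ => |p.1 - 1 - t * (p.2 - 1)| ^ 3 := by fun_prop
  rw [← integral_map (hEm.prodMk hE'm).aemeasurable hcont.aestronglyMeasurable, hjoint,
    integral_prod_eq_of_nonneg hcont.aestronglyMeasurable (fun p => by positivity) ?_
      (integrable_absCubeMoment_affine ht0), integral_absCubeMoment_affine ht0]
  filter_upwards [ae_pos_stdExpMeasure] with y hy
  have hc : 0 ≤ 1 - t + t * y := by nlinarith
  simp only [show ∀ x, x - 1 - t * (y - 1) = x - (1 - t + t * y) by intro x; ring]
  exact ⟨integrable_abs_sub_pow_three_stdExpMeasure _, integral_abs_sub_pow_three_stdExpMeasure hc⟩
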